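/- For all multisets S and T of integers: S ≻ms T holds if and only if List.Lex (· < ·) lT lS holds, where lS and lT are the lists of elements of S and T, respectively, sorted in non-increasing order (so that the sorted list of T is lexicographically smaller than that of S, with the convention that a proper prefix of a list is smaller than the list). -/

import Mathlib

/-- The maximum of a multiset of integers (0 for the empty multiset; only used on nonempty ones). -/
def mmax (S : Multiset ℤ) : ℤ := WithBot.unbotD 0 ((S.map (fun x => (x : WithBot ℤ))).sup)

/-- The minimum of a multiset of integers (0 for the empty multiset; only used on nonempty ones). -/
def mmin (S : Multiset ℤ) : ℤ := WithTop.untopD 0 ((S.map (fun x => (x : WithTop ℤ))).inf)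

/-- max order, weak: S ≿max T. -/
def geMax (S T : Multiset ℤ) : Prop := T = 0 ∨ (S ≠ 0 ∧ T ≠ 0 ∧ mmax S ≥ mmax T)

/-- max order, strict: S ≻max T. -/
def gtMax (S T : Multiset ℤ) : Prop := (S ≠ 0 ∧ T ≠ 0 ∧ mmax S > mmax T) ∨ (S ≠ 0 ∧ T = 0)

/-- min order, weak: S ≿min T. -/
def geMin (S T : Multiset ℤ) : Prop := S = 0 ∨ (S ≠ 0 ∧ T ≠ 0 ∧ mmin S ≥ mmin T)

/-- min order, strict: S ≻min T. -/
def gtMin (S T : Multiset ℤ) : Prop := (S ≠ 0 ∧ T ≠ 0 ∧ mmin S > mmin T) ∨ (S = 0 ∧ T ≠ 0)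

/-- multiset order, strict: S ≻ms T. -/
def gtMS (S T : Multiset ℤ) : Prop :=
  ∃ W U V : Multiset ℤ, U ≠ 0 ∧ S = W + U ∧ T = W + V ∧ gtMax U V

/-- multiset order, weak: S ≿ms T. -/
def geMS (S T : Multiset ℤ) : Prop := gtMS S T ∨ S = T

/-- dual multiset order, strict: S ≻dms T. -/
def gtDMS (S T : Multiset ℤ) : Prop :=
  ∃ W U V : Multiset ℤ, V ≠ 0 ∧ S = W + U ∧ T = W + V ∧ gtMin U V

/-- dual multiset order, weak: S ≿dms T. -/
def geDMS (S T : Multiset ℤ) : Prop := gtDMS S T ∨ S = T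

/-!
Both orders compare two multisets at the largest element whose multiplicities differ. In the
multiset order, once the common part `W` is cancelled, that element is the maximum of `U`: every
element of `V` lies below it. In the lexicographic order on non-increasing lists, it is the entry
at the first position where the two lists differ.
-/

open Multiset

section CountLex

variable {α : Type*} [LinearOrder α]

def CountLexLT (T S : Multiset α) : Prop :=
  ∃ x, T.count x < S.count x ∧ ∀ y, x < y → T.count y = S.count y

theorem countLexLT_add_left_iff {W T S : Multiset α} :
    CountLexLT (W + T) (W + S) ↔ CountLexLT T S := by
  simp only [CountLexLT, count_add, Nat.add_lt_add_iff_left, Nat.add_left_cancel_iff]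

theorem not_countLexLT_zero (T : Multiset α) : ¬CountLexLT T 0 := by
  rintro ⟨x, hlt, -⟩
  simp at hlt

theorem countLexLT_of_forall_lt {T S : Multiset α} {a : α} (ha : a ∈ S) (hS : ∀ x ∈ S, x ≤ a)
    (hT : ∀ x ∈ T, x < a) : CountLexLT T S := by
  refine ⟨a, ?_, fun y hy => ?_⟩
  · rw [count_eq_zero.2 fun h => (hT a h).false]
    exact count_pos.2 ha
  · rw [count_eq_zero.2 fun h => (hy.trans (hT y h)).false,
      count_eq_zero.2 fun h => (hy.trans_le (hS y h)).false]

theorem not_countLexLT_of_forall_lt {T S : Multiset α} {b : α} (hb : b ∈ T)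
    (hS : ∀ x ∈ S, x < b) : ¬CountLexLT T S := by
  rintro ⟨x, hlt, heq⟩
  have hxS : x ∈ S := count_pos.1 (Nat.zero_le _ |>.trans_lt hlt)
  have hb' := heq b (hS x hxS)
  rw [count_eq_zero.2 fun h => (hS b h).false] at hb'
  exact count_eq_zero.1 hb' hb

theorem le_head_of_pairwise_ge {a x : α} {l : List α} (h : (a :: l).Pairwise (· ≥ ·))
    (hx : x ∈ a :: l) : x ≤ a := by
  rcases List.mem_cons.1 hx with rfl | hx
  exacts [le_rfl, List.rel_of_pairwise_cons h hx]

theorem lex_lt_iff_countLexLT :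
    ∀ {l₁ l₂ : List α}, l₁.Pairwise (· ≥ ·) → l₂.Pairwise (· ≥ ·) →
      (List.Lex (· < ·) l₁ l₂ ↔ CountLexLT (l₁ : Multiset α) l₂)
  | [], [], _, _ => iff_of_false List.not_lex_nil (not_countLexLT_zero _)
  | _ :: _, [], _, _ => iff_of_false List.not_lex_nil (not_countLexLT_zero _)
  | [], b :: l₂, _, h₂ =>
    iff_of_true .nil <| countLexLT_of_forall_lt List.mem_cons_self
      (fun _ => le_head_of_pairwise_ge h₂) (by simp)
  | a :: l₁, b :: l₂, h₁, h₂ => by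
    rcases lt_trichotomy a b with hab | rfl | hba
    · exact iff_of_true (.rel hab) <| countLexLT_of_forall_lt List.mem_cons_self
        (fun _ => le_head_of_pairwise_ge h₂)
        (fun _ hx => (le_head_of_pairwise_ge h₁ hx).trans_lt hab)
    · rw [List.lex_cons_iff, ← cons_coe, ← cons_coe, ← singleton_add, ← singleton_add,
        countLexLT_add_left_iff]
      exact lex_lt_iff_countLexLT h₁.of_cons h₂.of_cons
    · refine iff_of_false ?_ <| not_countLexLT_of_forall_lt List.mem_cons_self
        (fun _ hx => (le_head_of_pairwise_ge h₂ hx).trans_lt hba)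
      simp [List.cons_lex_cons_iff, hba.not_gt, hba.ne']

end CountLex

theorem mmax_eq_of_mem_of_forall_le {S : Multiset ℤ} {m : ℤ} (hm : m ∈ S)
    (hle : ∀ x ∈ S, x ≤ m) : mmax S = m := by
  have hsup : (S.map ((↑) : ℤ → WithBot ℤ)).sup = m :=
    le_antisymm (Multiset.sup_le.2 (by simpa using hle)) (le_sup (mem_map_of_mem _ hm))
  simp [mmax, hsup]

theorem mmax_mem {S : Multiset ℤ} (hS : S ≠ 0) : mmax S ∈ S := by
  obtain ⟨m, hm, hle⟩ := S.exists_max_image id hS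
  rwa [mmax_eq_of_mem_of_forall_le hm hle]

theorem le_mmax {S : Multiset ℤ} {x : ℤ} (hx : x ∈ S) : x ≤ mmax S := by
  obtain ⟨m, hm, hle⟩ := S.exists_max_image id (by rintro rfl; simp at hx)
  rw [mmax_eq_of_mem_of_forall_le hm hle]
  exact hle x hx

theorem gtMax_iff_forall_lt_mmax {U V : Multiset ℤ} (hU : U ≠ 0) :
    gtMax U V ↔ ∀ v ∈ V, v < mmax U := by
  rcases eq_or_ne V 0 with rfl | hV
  · simp [gtMax, hU]
  · simp only [gtMax, hU, hV, ne_eq, not_false_eq_true, true_and, and_false, or_false]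
    exact ⟨fun h _ hv => (le_mmax hv).trans_lt h, fun h => h _ (mmax_mem hV)⟩

theorem gtMS_iff_countLexLT (S T : Multiset ℤ) : gtMS S T ↔ CountLexLT T S := by
  constructor
  · rintro ⟨W, U, V, hU, rfl, rfl, hUV⟩
    rw [gtMax_iff_forall_lt_mmax hU] at hUV
    exact countLexLT_add_left_iff.2 (countLexLT_of_forall_lt (mmax_mem hU) (fun _ => le_mmax) hUV)
  · rintro ⟨x, hlt, heq⟩
    have hx : x ∈ S - T := by
      rw [← count_pos, count_sub]
      omega
    have hU : S - T ≠ 0 := by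
      rintro h
      simp [h] at hx
    refine ⟨S ∩ T, S - T, T - S, hU, ?_, ?_, ?_⟩
    · rw [add_comm, sub_add_inter]
    · rw [add_comm, inter_comm, sub_add_inter]
    · refine (gtMax_iff_forall_lt_mmax hU).2 fun v hv => ?_
      rw [← count_pos, count_sub] at hv
      have hvx : v < x := by
        rcases lt_trichotomy v x with h | rfl | h
        · exact h
        · omega
        · have := heq v h
          omega
      exact hvx.trans_le (le_mmax hx)

/-- `S ≻ms T` iff the list of elements of `T` sorted in non-increasing order is
lexicographically (w.r.t. `<`, proper prefixes being smaller) smaller than that of `S`. -/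
theorem gtMS_iff_lex (S T : Multiset ℤ) :
    gtMS S T ↔
      List.Lex (· < ·) ((Multiset.sort T (· ≤ ·)).reverse)
        ((Multiset.sort S (· ≤ ·)).reverse) := by
  have sorted_ge (R : Multiset ℤ) : (R.sort (· ≤ ·)).reverse.Pairwise (· ≥ ·) :=
    List.pairwise_reverse.2 (pairwise_sort R _)
  rw [gtMS_iff_countLexLT, lex_lt_iff_countLexLT (sorted_ge T) (sorted_ge S), coe_reverse,
    coe_reverse, sort_eq, sort_eq]
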